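/- For each real 0 < α < 1 and each integer d ≥ 2, the complement [0,1) \ 𝓔_{α,d} is a set of the first Baire category (meagre) in [0,1). -/

import Mathlib

open Filter

/-- The monomial exponential sum `σ_d(x; N) = ∑_{n=1}^N e(x n^d)`. -/
noncomputable def monSum (d : ℕ) (x : ℝ) (N : ℕ) : ℂ :=
  ∑ n ∈ Finset.Icc 1 N,
    Complex.exp (2 * (Real.pi : ℂ) * Complex.I * ((x : ℂ) * (n : ℂ) ^ d))

/-- The exceptional set `𝓔_{α,d}`: points of `[0,1)` with `|σ_d(x;N)| ≥ N^α`
for infinitely many `N`. -/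
def monExcSet (d : ℕ) (α : ℝ) : Set ℝ :=
  {x | x ∈ Set.Ico (0 : ℝ) 1 ∧
    ∃ᶠ N : ℕ in atTop, (N : ℝ) ^ α ≤ ‖monSum d x N‖}

section Aux
open Finset

noncomputable def eC (t : ℝ) : ℂ := Complex.exp (2 * Real.pi * Complex.I * t)

lemma eC_add (s t : ℝ) : eC (s + t) = eC s * eC t := by
  rw [eC, eC, eC, ← Complex.exp_add]; push_cast; ring_nf

lemma eC_int (m : ℤ) : eC (m : ℝ) = 1 := by
  rw [eC]
  push_cast
  rw [show 2 * (Real.pi:ℂ) * Complex.I * (m:ℂ) = (m:ℂ) * (2 * Real.pi * Complex.I) by ring]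
  exact Complex.exp_int_mul_two_pi_mul_I m

lemma sum_range_mul' (f : ℕ → ℂ) (A B : ℕ) :
    ∑ n ∈ range (A * B), f n = ∑ j ∈ range B, ∑ i ∈ range A, f (i + A * j) := by
  induction B with
  | zero => simp
  | succ B ih =>
      rw [Nat.mul_succ, Finset.sum_range_add, ih, Finset.sum_range_succ]
      congr 1
      exact Finset.sum_congr rfl fun i _ => by rw [Nat.add_comm]

lemma pow_expand (u w : ℕ) : ∀ d : ℕ,
    ∃ C : ℕ, (u + w) ^ (d + 1) = u ^ (d + 1) + (d + 1) * u ^ d * w + w ^ 2 * C := by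
  intro d
  induction d with
  | zero => exact ⟨0, by ring⟩
  | succ d ih =>
      obtain ⟨C, hC⟩ := ih
      refine ⟨u * C + (d + 1) * u ^ d + w * C, ?_⟩
      rw [pow_succ', hC]; ring

lemma eC_geom (p L : ℕ) (hp : 0 < p) (hpL : p ∣ L) (m : ℤ) :
    ∑ v ∈ range L, eC ((m : ℝ) * v / p) = if (p : ℤ) ∣ m then (L : ℂ) else 0 := by
  have hp0 : (p : ℝ) ≠ 0 := Nat.cast_ne_zero.mpr hp.ne'
  have hp0C : (p : ℂ) ≠ 0 := Nat.cast_ne_zero.mpr hp.ne'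
  have hterm : ∀ v : ℕ, eC ((m : ℝ) * v / p) = (eC ((m : ℝ) / p)) ^ v := by
    intro v
    rw [eC, eC, ← Complex.exp_nat_mul]
    congr 1
    push_cast
    ring
  by_cases hdvd : (p : ℤ) ∣ m
  · obtain ⟨k, rfl⟩ := hdvd
    have : ((p * k : ℤ) : ℝ) / p = ((k : ℤ) : ℝ) := by push_cast; field_simp
    simp only [hterm, this, eC_int, one_pow, Finset.sum_const, Finset.card_range,
      nsmul_eq_mul, mul_one]
    rw [if_pos (show ((p : ℤ)) ∣ p * k from ⟨k, rfl⟩)]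
  · rw [if_neg hdvd]
    have hz : eC ((m : ℝ) / p) ≠ 1 := by
      intro h
      rw [eC, Complex.exp_eq_one_iff] at h
      obtain ⟨n, hn⟩ := h
      have h2 : (2 * Real.pi * Complex.I : ℂ) ≠ 0 := by
        simp [Real.pi_ne_zero, Complex.I_ne_zero]
      have h3 : ((( (m : ℝ) / p : ℝ)) : ℂ) = (n : ℂ) :=
        mul_left_cancel₀ h2 (by rw [hn]; ring)
      have h4 : (m : ℝ) / p = (n : ℝ) := by exact_mod_cast h3
      apply hdvd
      refine ⟨n, ?_⟩
      have h5 : (m : ℝ) = (p : ℝ) * n := by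
        field_simp at h4; linarith [h4]
      exact_mod_cast h5
    simp only [hterm]
    rw [geom_sum_eq hz]
    obtain ⟨K, rfl⟩ := hpL
    have hpow : eC ((m : ℝ) / p) ^ (p * K) = 1 := by
      rw [eC, ← Complex.exp_nat_mul]
      have : ((p * K : ℕ) : ℂ) * (2 * Real.pi * Complex.I * (((m : ℝ) / p : ℝ) : ℂ))
          = ((m * K : ℤ) : ℂ) * (2 * Real.pi * Complex.I) := by
        push_cast
        field_simp
      rw [this, Complex.exp_int_mul_two_pi_mul_I]
    rw [hpow, sub_self, zero_div]

lemma key_sum (p e K : ℕ) (hp : p.Prime) (hpd : ¬ p ∣ (e + 2)) (c : ℤ)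
    (hc : ¬ (p : ℤ) ∣ c) :
    ∑ n ∈ range (K * p ^ (e + 2)), eC ((c : ℝ) * (n : ℝ) ^ (e + 2) / (p : ℝ) ^ (e + 2))
      = ((K * p ^ (e + 1) : ℕ) : ℂ) := by
  have hp0 : 0 < p := hp.pos
  have hp0R : (p : ℝ) ≠ 0 := Nat.cast_ne_zero.mpr hp0.ne'
  have hsplit : K * p ^ (e + 2) = p ^ (e + 1) * (K * p) := by ring
  rw [hsplit, sum_range_mul']
  rw [Finset.sum_comm]
  have hinner : ∀ u ∈ range (p ^ (e + 1)),
      (∑ v ∈ range (K * p), eC ((c : ℝ) * ((u + p ^ (e + 1) * v : ℕ) : ℝ) ^ (e + 2) / (p : ℝ) ^ (e + 2)))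
        = if p ∣ u then ((K * p : ℕ) : ℂ) else 0 := by
    intro u hu
    have huP : u < p ^ (e + 1) := Finset.mem_range.mp hu
    set m : ℤ := c * (e + 2) * (u : ℤ) ^ (e + 1) with hm
    have hterm : ∀ v : ℕ,
        eC ((c : ℝ) * ((u + p ^ (e + 1) * v : ℕ) : ℝ) ^ (e + 2) / (p : ℝ) ^ (e + 2))
          = eC ((c : ℝ) * (u : ℝ) ^ (e + 2) / (p : ℝ) ^ (e + 2)) * eC ((m : ℝ) * v / p) := by
      intro v
      obtain ⟨C0, hC0⟩ := pow_expand u (p ^ (e + 1) * v) (e + 1)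
      have harg : (c : ℝ) * ((u + p ^ (e + 1) * v : ℕ) : ℝ) ^ (e + 2) / (p : ℝ) ^ (e + 2)
          = ((c : ℝ) * (u : ℝ) ^ (e + 2) / (p : ℝ) ^ (e + 2) + (m : ℝ) * v / p)
            + ((c * C0 * (v : ℤ) ^ 2 * (p : ℤ) ^ e : ℤ) : ℝ) := by
        have hC0R : (((u + p ^ (e + 1) * v : ℕ) : ℝ)) ^ (e + 2)
            = (u : ℝ) ^ (e + 2) + ((e : ℝ) + 2) * (u : ℝ) ^ (e + 1) * ((p : ℝ) ^ (e + 1) * v)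
              + ((p : ℝ) ^ (e + 1) * v) ^ 2 * C0 := by
          exact_mod_cast congrArg (Nat.cast : ℕ → ℝ) hC0
        rw [hC0R, hm]
        push_cast
        field_simp
        ring
      rw [harg, eC_add, eC_add, eC_int, mul_one]
    rw [Finset.sum_congr rfl (fun v _ => hterm v), ← Finset.mul_sum,
      eC_geom p (K * p) hp0 ⟨K, mul_comm K p⟩ m]
    have hdvd_iff : (p : ℤ) ∣ m ↔ p ∣ u := by
      constructor
      · intro h
        have hpp : Prime (p : ℤ) := Nat.prime_iff_prime_int.mp hp
        rcases hpp.dvd_mul.mp h with h1 | h2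
        · rcases hpp.dvd_mul.mp h1 with h3 | h4
          · exact absurd h3 hc
          · exfalso; apply hpd; exact_mod_cast h4
        · have := hpp.dvd_of_dvd_pow h2
          exact_mod_cast this
      · intro h
        obtain ⟨w, rfl⟩ := h
        refine Dvd.dvd.mul_left ?_ _
        push_cast
        exact dvd_pow (dvd_mul_right (p : ℤ) (w : ℤ)) (Nat.succ_ne_zero e)
    by_cases hpu : p ∣ u
    · rw [if_pos hpu, if_pos (hdvd_iff.mpr hpu)]
      obtain ⟨w, rfl⟩ := hpu
      have : (c : ℝ) * ((p * w : ℕ) : ℝ) ^ (e + 2) / (p : ℝ) ^ (e + 2)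
          = ((c * (w : ℤ) ^ (e + 2) : ℤ) : ℝ) := by
        push_cast
        field_simp
        ring
      rw [this, eC_int, one_mul]
    · rw [if_neg hpu, if_neg (fun h => hpu (hdvd_iff.mp h)), mul_zero]
  rw [Finset.sum_congr rfl hinner]
  have hcount : ∑ u ∈ range (p ^ (e + 1)), (if p ∣ u then ((K * p : ℕ) : ℂ) else 0)
      = ((p ^ e : ℕ) : ℂ) * ((K * p : ℕ) : ℂ) := by
    have h1 : p ^ (e + 1) = p * p ^ e := by ring
    rw [h1, sum_range_mul']
    have hrow : ∀ j ∈ range (p ^ e),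
        (∑ i ∈ range p, (if p ∣ (i + p * j) then ((K * p : ℕ) : ℂ) else 0)) = ((K * p : ℕ) : ℂ) := by
      intro j _
      have : ∀ i ∈ range p, (if p ∣ (i + p * j) then ((K * p : ℕ) : ℂ) else 0)
          = (if i = 0 then ((K * p : ℕ) : ℂ) else 0) := by
        intro i hi
        have hip : i < p := Finset.mem_range.mp hi
        by_cases h : p ∣ (i + p * j)
        · have hpi : p ∣ i := (Nat.dvd_add_right (Dvd.intro j rfl)).mp (by rwa [add_comm] at h)
          have : i = 0 := Nat.eq_zero_of_dvd_of_lt hpi hip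
          rw [if_pos h, if_pos this]
        · have : i ≠ 0 := by
            rintro rfl
            exact h ⟨j, by ring⟩
          rw [if_neg h, if_neg this]
      rw [Finset.sum_congr rfl this, Finset.sum_ite_eq' (range p) 0 (fun _ => ((K * p : ℕ) : ℂ))]
      rw [if_pos (Finset.mem_range.mpr hp0)]
    rw [Finset.sum_congr rfl hrow, Finset.sum_const, Finset.card_range, nsmul_eq_mul]
  rw [hcount]
  push_cast
  ring

lemma monSum_term (d : ℕ) (x : ℝ) (n : ℕ) :
    Complex.exp (2 * (Real.pi : ℂ) * Complex.I * ((x : ℂ) * (n : ℂ) ^ d))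
      = eC (x * (n : ℝ) ^ d) := by
  rw [eC]
  congr 1
  push_cast
  ring

lemma monSum_rat (p e K : ℕ) (hp : p.Prime) (hpd : ¬ p ∣ (e + 2)) (c : ℤ)
    (hc : ¬ (p : ℤ) ∣ c) :
    monSum (e + 2) ((c : ℝ) / (p : ℝ) ^ (e + 2)) (K * p ^ (e + 2))
      = ((K * p ^ (e + 1) : ℕ) : ℂ) := by
  have hp0 : 0 < p := hp.pos
  have hp0R : (p : ℝ) ≠ 0 := Nat.cast_ne_zero.mpr hp0.ne'
  set N := K * p ^ (e + 2) with hN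
  set g : ℕ → ℂ := fun n => eC ((c : ℝ) * (n : ℝ) ^ (e + 2) / (p : ℝ) ^ (e + 2)) with hg
  have hterm : ∀ n : ℕ,
      Complex.exp (2 * (Real.pi : ℂ) * Complex.I
        * ((((c : ℝ) / (p : ℝ) ^ (e + 2) : ℝ) : ℂ) * (n : ℂ) ^ (e + 2))) = g n := by
    intro n
    rw [monSum_term, hg]
    congr 1
    field_simp
  have hg0 : g 0 = 1 := by
    have : (c : ℝ) * ((0 : ℕ) : ℝ) ^ (e + 2) / (p : ℝ) ^ (e + 2) = ((0 : ℤ) : ℝ) := by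
      push_cast; ring
    rw [hg]; simp only [this, eC_int]
  have hgN : g N = 1 := by
    obtain ⟨B, hB⟩ : p ^ (e + 2) ∣ N ^ (e + 2) :=
      dvd_pow (dvd_mul_left (p ^ (e + 2)) K) (Nat.succ_ne_zero (e + 1))
    have hBR : ((N : ℝ)) ^ (e + 2) = (p : ℝ) ^ (e + 2) * (B : ℝ) := by
      exact_mod_cast congrArg (Nat.cast : ℕ → ℝ) hB
    have : (c : ℝ) * (N : ℝ) ^ (e + 2) / (p : ℝ) ^ (e + 2) = ((c * (B : ℤ) : ℤ) : ℝ) := by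
      rw [hBR]; push_cast; field_simp
    rw [hg]; simp only [this, eC_int]
  have hIcc : ∑ n ∈ Finset.Icc 1 N, g n = ∑ n ∈ range N, g n := by
    have hins : range (N + 1) = insert 0 (Finset.Icc 1 N) := by
      ext n
      simp only [Finset.mem_range, Finset.mem_insert, Finset.mem_Icc]
      omega
    have h0 : (0 : ℕ) ∉ Finset.Icc 1 N := by simp
    have e1 : ∑ n ∈ range (N + 1), g n = g 0 + ∑ n ∈ Finset.Icc 1 N, g n := by
      rw [hins, Finset.sum_insert h0]
    have e2 : ∑ n ∈ range (N + 1), g n = ∑ n ∈ range N, g n + g N :=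
      Finset.sum_range_succ g N
    rw [e2, hg0, hgN] at e1
    linear_combination -e1
  rw [monSum]
  rw [Finset.sum_congr rfl (fun n _ => hterm n), hIcc, hN]
  exact key_sum p e K hp hpd c hc

lemma exists_bad (d : ℕ) (hd : 2 ≤ d) (α : ℝ) (hα0 : 0 < α) (hα1 : α < 1) (M : ℕ)
    (a b : ℝ) (hab : a < b) :
    ∃ x ∈ Set.Ioo a b, ∃ N : ℕ, M ≤ N ∧ (N : ℝ) ^ α < ‖monSum d x N‖ := by
  obtain ⟨e, rfl⟩ : ∃ e, d = e + 2 := ⟨d - 2, by omega⟩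
  -- choose a prime p
  obtain ⟨p, hpge, hp⟩ := Nat.exists_infinite_primes (max (e + 3) (⌈2 / (b - a)⌉₊ + 1))
  have hpd : ¬ p ∣ (e + 2) := by
    intro h
    have := Nat.le_of_dvd (by omega) h
    have := le_of_max_le_left hpge
    omega
  have hp0 : 0 < p := hp.pos
  set q : ℕ := p ^ (e + 2) with hq
  have hq0 : 0 < q := pow_pos hp0 _
  have hq0R : (0 : ℝ) < (q : ℝ) := by exact_mod_cast hq0
  have hpq : p ≤ q := Nat.le_self_pow (Nat.succ_ne_zero (e + 1)) p
  have hba : (0 : ℝ) < b - a := by linarith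
  have h2q : 2 < (b - a) * q := by
    have h1 : (2 / (b - a)) < (p : ℝ) := by
      have : (⌈2 / (b - a)⌉₊ + 1 : ℕ) ≤ p := le_of_max_le_right hpge
      have h2 : 2 / (b - a) ≤ (⌈2 / (b - a)⌉₊ : ℝ) := Nat.le_ceil _
      have h3 : ((⌈2 / (b - a)⌉₊ : ℕ) : ℝ) < ((⌈2 / (b - a)⌉₊ + 1 : ℕ) : ℝ) := by
        exact_mod_cast Nat.lt_succ_self _
      calc 2 / (b - a) ≤ (⌈2 / (b - a)⌉₊ : ℝ) := h2
        _ < ((⌈2 / (b - a)⌉₊ + 1 : ℕ) : ℝ) := h3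
        _ ≤ (p : ℝ) := by exact_mod_cast this
    have hqp : (p : ℝ) ≤ (q : ℝ) := by exact_mod_cast hpq
    have := (div_lt_iff₀ hba).mp h1
    nlinarith
  -- choose the numerator c
  set m : ℤ := ⌊a * q⌋ + 1 with hm
  have hm1 : a * q < (m : ℝ) := by rw [hm]; push_cast; exact Int.lt_floor_add_one _
  have hm2 : (m : ℝ) + 1 < b * q := by
    have : (⌊a * q⌋ : ℝ) ≤ a * q := Int.floor_le _
    rw [hm]; push_cast
    nlinarith
  obtain ⟨c, hcd, hc1, hc2⟩ : ∃ c : ℤ, ¬ (p : ℤ) ∣ c ∧ a * q < (c : ℝ) ∧ (c : ℝ) < b * q := by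
    by_cases hdm : (p : ℤ) ∣ m
    · refine ⟨m + 1, ?_, ?_, ?_⟩
      · intro h
        have h1 : (p : ℤ) ∣ 1 := by
          have := dvd_sub h hdm
          simpa using this
        have := Int.le_of_dvd one_pos h1
        have : (2 : ℤ) ≤ (p : ℤ) := by exact_mod_cast hp.two_le
        omega
      · push_cast; linarith
      · push_cast; linarith
    · exact ⟨m, hdm, hm1, by linarith⟩
  set x : ℝ := (c : ℝ) / (q : ℝ) with hx
  have hxIoo : x ∈ Set.Ioo a b := by
    constructor
    · rw [hx, lt_div_iff₀ hq0R]; linarith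
    · rw [hx, div_lt_iff₀ hq0R]; linarith
  -- choose K
  have h1α : (0 : ℝ) < 1 - α := by linarith
  have htend : Tendsto (fun K : ℕ => ((K : ℝ)) ^ (1 - α)) atTop atTop :=
    (tendsto_rpow_atTop h1α).comp tendsto_natCast_atTop_atTop
  obtain ⟨K, hK1, hK2⟩ :=
    ((htend.eventually_gt_atTop ((q : ℝ) ^ α)).and (eventually_ge_atTop (max M 1))).exists
  have hKM : M ≤ K := le_of_max_le_left hK2
  have hK0 : 1 ≤ K := le_of_max_le_right hK2
  have hK0R : (0 : ℝ) < (K : ℝ) := by exact_mod_cast hK0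
  refine ⟨x, hxIoo, K * q, ?_, ?_⟩
  · calc M ≤ K := hKM
      _ = K * 1 := (mul_one K).symm
      _ ≤ K * q := Nat.mul_le_mul_left K hq0
  · have habs : ‖monSum (e + 2) x (K * q)‖ = ((K * p ^ (e + 1) : ℕ) : ℝ) := by
      have hcast : ((q : ℕ) : ℝ) = (p : ℝ) ^ (e + 2) := by rw [hq]; push_cast; ring
      rw [hx, hcast, hq, monSum_rat p e K hp hpd c hcd, Complex.norm_natCast]
    rw [habs]
    have hrpow : ((K * q : ℕ) : ℝ) ^ α < (K : ℝ) := by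
      have hcast : ((K * q : ℕ) : ℝ) = (K : ℝ) * (q : ℝ) := by push_cast; ring
      rw [hcast, Real.mul_rpow (le_of_lt hK0R) (le_of_lt hq0R)]
      have hKα : (0 : ℝ) < (K : ℝ) ^ α := Real.rpow_pos_of_pos hK0R _
      calc (K : ℝ) ^ α * (q : ℝ) ^ α < (K : ℝ) ^ α * (K : ℝ) ^ (1 - α) :=
            (mul_lt_mul_iff_right₀ hKα).mpr hK1
        _ = (K : ℝ) ^ (α + (1 - α)) := (Real.rpow_add hK0R _ _).symm
        _ = (K : ℝ) ^ (1 : ℝ) := by norm_num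
        _ = (K : ℝ) := Real.rpow_one _
    calc ((K * q : ℕ) : ℝ) ^ α < (K : ℝ) := hrpow
      _ ≤ ((K * p ^ (e + 1) : ℕ) : ℝ) := by
          have : K ≤ K * p ^ (e + 1) := Nat.le_mul_of_pos_right K (pow_pos hp0 _)
          exact_mod_cast this

end Aux

/-- For `0 < α < 1` and `d ≥ 2`, the complement `[0,1) \ 𝓔_{α,d}` is meagre. -/
theorem stmt5 (d : ℕ) (hd : 2 ≤ d) (α : ℝ) (hα0 : 0 < α) (hα1 : α < 1) :
    IsMeagre (Set.Ico (0 : ℝ) 1 \ monExcSet d α) := by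
  set C : ℕ → Set ℝ :=
    fun M => {x : ℝ | ∀ N : ℕ, M ≤ N → ‖monSum d x N‖ ≤ (N : ℝ) ^ α} with hC
  have hsub : Set.Ico (0 : ℝ) 1 \ monExcSet d α ⊆ ⋃ M, C M := by
    rintro x ⟨hx, hxe⟩
    have hfreq : ¬ ∃ᶠ N : ℕ in atTop, (N : ℝ) ^ α ≤ ‖monSum d x N‖ :=
      fun h => hxe ⟨hx, h⟩
    rw [Filter.not_frequently] at hfreq
    rw [Filter.eventually_atTop] at hfreq
    obtain ⟨M, hM⟩ := hfreq
    exact Set.mem_iUnion.mpr ⟨M, fun N hN => le_of_lt (lt_of_not_ge (hM N hN))⟩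
  refine IsMeagre.mono hsub ?_
  apply isMeagre_iUnion
  intro M
  have hcont : ∀ N : ℕ, Continuous fun x : ℝ => ‖monSum d x N‖ := by
    intro N
    apply continuous_norm.comp
    unfold monSum
    apply continuous_finset_sum
    intro n _
    exact (continuous_const.mul (Complex.continuous_ofReal.mul continuous_const)).cexp
  have hclosed : IsClosed (C M) := by
    have hCeq : C M = ⋂ N ∈ Set.Ici M, {x : ℝ | ‖monSum d x N‖ ≤ (N : ℝ) ^ α} := by
      ext x
      simp only [hC, Set.mem_setOf_eq, Set.mem_iInter, Set.mem_Ici]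
    rw [hCeq]
    exact isClosed_biInter fun N _ => isClosed_le (hcont N) continuous_const
  have hnd : IsNowhereDense (C M) := by
    rw [hclosed.isNowhereDense_iff, interior_eq_empty_iff_dense_compl]
    rw [dense_iff_exists_between]
    intro a b hab
    obtain ⟨x, hxIoo, N, hNM, hNlt⟩ := exists_bad d hd α hα0 hα1 M a b hab
    refine ⟨x, ?_, hxIoo⟩
    intro hxC
    exact absurd (hxC N hNM) (not_le.mpr hNlt)
  rw [isMeagre_iff_countable_union_isNowhereDense]
  exact ⟨{C M}, by simpa using hnd, Set.countable_singleton _, by simp⟩
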